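/- arXiv:2311.15487 — 3 statements merged into one kernel-verified Lean document; each statement's English description precedes it below -/
import Mathlib

section
/- Suppose Z : ℝ → ℝ^K is differentiable and solves ∂_s Z(s) = -Pen[D[Z(s)]] ∇_x C[x[Z(s)]], where x : ℝ^K → ℝ^n is differentiable with Jacobian D[Z] of maximal rank n ≤ K along the orbit, and Pen[D] = Dᵀ(D Dᵀ)⁻¹. Then the curve u(s) := x[Z(s)] satisfies ∂_s u(s) = -∇C[u(s)]. -/
/-!
Since `D Dᵀ` is invertible when `D` has full row rank, `Pen[D] = Dᵀ (D Dᵀ)⁻¹` is a right inverse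
of `D`. By the chain rule `∂ₛ x[Z(s)] = D[Z(s)] ∂ₛ Z(s) = -D Pen[D] ∇C = -∇C`.
-/

open Matrix

namespace Matrix

variable {m n R : Type*} [Fintype m] [DecidableEq m] [Fintype n]

theorem isUnit_of_rank_eq_card [Field R] {A : Matrix m m R} (h : A.rank = Fintype.card m) :
    IsUnit A := by
  have hrange : LinearMap.range A.mulVecLin = ⊤ :=
    Submodule.eq_top_of_finrank_eq (by rw [← rank, h, Module.finrank_fintype_fun_eq_card])
  exact mulVec_surjective_iff_isUnit.mp (LinearMap.range_eq_top.mp hrange)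

theorem mul_transpose_mul_inv_eq_one [Field R] [LinearOrder R] [IsStrictOrderedRing R]
    {A : Matrix m n R} (h : A.rank = Fintype.card m) : A * (Aᵀ * (A * Aᵀ)⁻¹) = 1 := by
  have hunit : IsUnit (A * Aᵀ) := isUnit_of_rank_eq_card (by rw [rank_self_mul_transpose, h])
  rw [← Matrix.mul_assoc, mul_nonsing_inv _ ((isUnit_iff_isUnit_det _).mp hunit)]

theorem toEuclideanLin_apply_toEuclideanLin_of_mul_eq_one [DecidableEq n] [RCLike R]
    {A : Matrix m n R} {B : Matrix n m R} (h : A * B = 1) (v : EuclideanSpace R m) :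
    toEuclideanLin A (toEuclideanLin B v) = v := by
  simp [toLpLin_apply, mulVec_mulVec, h]

end Matrix

theorem overparam_flow_pushforward_general
    (n K : ℕ)
    (x : EuclideanSpace ℝ (Fin K) → EuclideanSpace ℝ (Fin n))
    (C : EuclideanSpace ℝ (Fin n) → ℝ)
    (D : EuclideanSpace ℝ (Fin K) → Matrix (Fin n) (Fin K) ℝ)
    (hx : ∀ W, HasFDerivAt x (LinearMap.toContinuousLinearMap (Matrix.toEuclideanLin (D W))) W)
    (Z : ℝ → EuclideanSpace ℝ (Fin K))
    (hrank : ∀ s : ℝ, (D (Z s)).rank = n)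
    (hode : ∀ s : ℝ, HasDerivAt Z
      (-(Matrix.toEuclideanLin ((D (Z s))ᵀ * (D (Z s) * (D (Z s))ᵀ)⁻¹)
        (gradient C (x (Z s))))) s) :
    ∀ s : ℝ, HasDerivAt (fun t => x (Z t)) (-(gradient C (x (Z s)))) s := by
  intro s
  have hright : D (Z s) * ((D (Z s))ᵀ * (D (Z s) * (D (Z s))ᵀ)⁻¹) = 1 :=
    mul_transpose_mul_inv_eq_one (by rw [hrank s, Fintype.card_fin])
  have hchain := (hx (Z s)).comp_hasDerivAt s (hode s)
  rwa [LinearMap.coe_toContinuousLinearMap', map_neg,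
    toEuclideanLin_apply_toEuclideanLin_of_mul_eq_one hright] at hchain

theorem overparam_flow_pushforward
    (n K : ℕ) (hnK : n ≤ K)
    (x : EuclideanSpace ℝ (Fin K) → EuclideanSpace ℝ (Fin n))
    (C : EuclideanSpace ℝ (Fin n) → ℝ)
    (D : EuclideanSpace ℝ (Fin K) → Matrix (Fin n) (Fin K) ℝ)
    (hx : ∀ W, HasFDerivAt x (LinearMap.toContinuousLinearMap (Matrix.toEuclideanLin (D W))) W)
    (Z : ℝ → EuclideanSpace ℝ (Fin K))
    (hrank : ∀ s : ℝ, (D (Z s)).rank = n)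
    (hode : ∀ s : ℝ, HasDerivAt Z
      (-(Matrix.toEuclideanLin ((D (Z s))ᵀ * (D (Z s) * (D (Z s))ᵀ)⁻¹)
        (gradient C (x (Z s))))) s) :
    ∀ s : ℝ, HasDerivAt (fun t => x (Z t)) (-(gradient C (x (Z s)))) s :=
  overparam_flow_pushforward_general n K x C D hx Z hrank hode
end

section
/- Under the modified overparametrized gradient flow with maximal rank along the orbit, x[Z(s)] - y = e^{-s/N}(x[Z(0)] - y) for all s ≥ 0; hence x[Z(s)] → y as s → ∞. -/
/-!
Since `D Dᵀ` is invertible along the orbit, `Dᵀ (D Dᵀ)⁻¹` is a right inverse of `D`, so by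
the chain rule the output error `u(s) = x[Z(s)] - y` solves the linear ODE `u' = -(1/N) u`.
Hence `e^{s/N} u(s)` has zero derivative, giving `u(s) = e^{-s/N} u(0)`, which tends to `0`.
-/

open Matrix Filter Topology

theorem Matrix.isUnit_of_rank_eq_card_s11 {K ι : Type*} [Field K] [Fintype ι] [DecidableEq ι]
    {A : Matrix ι ι K} (h : A.rank = Fintype.card ι) : IsUnit A := by
  rw [← mulVec_surjective_iff_isUnit]
  refine LinearMap.range_eq_top.mp
    (Submodule.eq_top_of_finrank_eq (S := LinearMap.range A.mulVecLin) ?_)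
  rw [← rank, h, Module.finrank_fintype_fun_eq_card]

theorem Matrix.mul_transpose_mul_inv_eq_one_s11 {K m n : Type*} [Field K] [LinearOrder K]
    [IsStrictOrderedRing K] [Fintype m] [Fintype n] [DecidableEq m] {A : Matrix m n K}
    (h : A.rank = Fintype.card m) : A * (Aᵀ * (A * Aᵀ)⁻¹) = 1 := by
  have hunit : IsUnit (A * Aᵀ) := isUnit_of_rank_eq_card_s11 (by rw [rank_self_mul_transpose, h])
  rw [← Matrix.mul_assoc, mul_nonsing_inv _ ((isUnit_iff_isUnit_det _).mp hunit)]

theorem Matrix.toEuclideanLin_mul_apply {𝕜 l m n : Type*} [RCLike 𝕜] [Fintype l] [Fintype m]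
    [Fintype n] [DecidableEq m] [DecidableEq n] (A : Matrix l m 𝕜) (B : Matrix m n 𝕜)
    (v : EuclideanSpace 𝕜 n) :
    toEuclideanLin (A * B) v = toEuclideanLin A (toEuclideanLin B v) := by
  simp

theorem eq_exp_mul_smul_of_hasDerivAt {E : Type*} [NormedAddCommGroup E] [NormedSpace ℝ E]
    {u : ℝ → E} {c : ℝ} (hu : ∀ s, HasDerivAt u (c • u s) s) (s : ℝ) :
    u s = Real.exp (c * s) • u 0 := by
  have hdecay (t : ℝ) :
      HasDerivAt (fun t => Real.exp (-(c * t))) (Real.exp (-(c * t)) * -c) t := by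
    simpa using ((hasDerivAt_id t).const_mul c).neg.exp
  have hconst (t : ℝ) : HasDerivAt (fun t => Real.exp (-(c * t)) • u t) 0 t := by
    refine ((hdecay t).smul (hu t)).congr_deriv ?_
    rw [smul_smul, ← add_smul, mul_neg, add_neg_cancel, zero_smul]
  have := is_const_of_deriv_eq_zero (fun t => (hconst t).differentiableAt)
    (fun t => (hconst t).deriv) 0 s
  rw [mul_zero, neg_zero, Real.exp_zero, one_smul] at this
  rw [this, smul_smul, ← Real.exp_add, add_neg_cancel, Real.exp_zero, one_smul]

theorem tendsto_exp_neg_div_smul_add {E : Type*} [NormedAddCommGroup E] [NormedSpace ℝ E]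
    {N : ℝ} (hN : 0 < N) (v y : E) :
    Tendsto (fun s => Real.exp (-s / N) • v + y) atTop (𝓝 y) := by
  have hexp : Tendsto (fun s => Real.exp (-s / N)) atTop (𝓝 0) := by
    refine (Real.tendsto_exp_neg_atTop_nhds_zero.comp (tendsto_id.atTop_div_const hN)).congr ?_
    simp [neg_div]
  simpa using (hexp.smul_const v).add_const y

theorem overparam_flow_output_convergence_general
    (n K : ℕ) (N : ℝ) (hN : 0 < N) (y : EuclideanSpace ℝ (Fin n))
    (x : EuclideanSpace ℝ (Fin K) → EuclideanSpace ℝ (Fin n))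
    (D : EuclideanSpace ℝ (Fin K) → Matrix (Fin n) (Fin K) ℝ)
    (hx : ∀ W, HasFDerivAt x (LinearMap.toContinuousLinearMap (Matrix.toEuclideanLin (D W))) W)
    (Z : ℝ → EuclideanSpace ℝ (Fin K))
    (hrank : ∀ s : ℝ, (D (Z s)).rank = n)
    (hode : ∀ s : ℝ, HasDerivAt Z
      (-(Matrix.toEuclideanLin ((D (Z s))ᵀ * (D (Z s) * (D (Z s))ᵀ)⁻¹)
        ((1 / N) • (x (Z s) - y)))) s) :
    (∀ s : ℝ, 0 ≤ s → x (Z s) - y = Real.exp (-s / N) • (x (Z 0) - y)) ∧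
      Filter.Tendsto (fun s => x (Z s)) Filter.atTop (nhds y) := by
  have herror (s : ℝ) :
      HasDerivAt (fun s => x (Z s) - y) ((-(1 / N)) • (x (Z s) - y)) s := by
    refine (((hx (Z s)).comp_hasDerivAt s (hode s)).sub_const y).congr_deriv ?_
    have hright : D (Z s) * ((D (Z s))ᵀ * (D (Z s) * (D (Z s))ᵀ)⁻¹) = 1 :=
      mul_transpose_mul_inv_eq_one_s11 (by rw [hrank, Fintype.card_fin])
    rw [LinearMap.coe_toContinuousLinearMap', map_neg, ← toEuclideanLin_mul_apply, hright,
      neg_smul]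
    simp
  have hformula (s : ℝ) : x (Z s) - y = Real.exp (-s / N) • (x (Z 0) - y) := by
    rw [eq_exp_mul_smul_of_hasDerivAt herror s, neg_mul, one_div_mul_eq_div, neg_div]
  refine ⟨fun s _ => hformula s, (tendsto_exp_neg_div_smul_add hN (x (Z 0) - y) y).congr
    fun s => ?_⟩
  rw [← hformula s, sub_add_cancel]

theorem overparam_flow_output_convergence
    (n K : ℕ) (hnK : n ≤ K) (N : ℝ) (hN : 0 < N) (y : EuclideanSpace ℝ (Fin n))
    (x : EuclideanSpace ℝ (Fin K) → EuclideanSpace ℝ (Fin n))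
    (D : EuclideanSpace ℝ (Fin K) → Matrix (Fin n) (Fin K) ℝ)
    (hx : ∀ W, HasFDerivAt x (LinearMap.toContinuousLinearMap (Matrix.toEuclideanLin (D W))) W)
    (Z : ℝ → EuclideanSpace ℝ (Fin K))
    (hrank : ∀ s : ℝ, (D (Z s)).rank = n)
    (hode : ∀ s : ℝ, HasDerivAt Z
      (-(Matrix.toEuclideanLin ((D (Z s))ᵀ * (D (Z s) * (D (Z s))ᵀ)⁻¹)
        ((1 / N) • (x (Z s) - y)))) s) :
    (∀ s : ℝ, 0 ≤ s → x (Z s) - y = Real.exp (-s / N) • (x (Z 0) - y)) ∧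
      Filter.Tendsto (fun s => x (Z s)) Filter.atTop (nhds y) :=
  overparam_flow_output_convergence_general n K N hN y x D hx Z hrank hode
end

section
/- If Z* is a critical point of the underparametrized modified gradient flow (i.e., (DᵀD)⁻¹Dᵀ∇C[x[Z*]] = 0 with rank D[Z*] = K), then 𝒫[Z*]∇_x C[x[Z*]] = 0, and consequently C[x[Z*]] = (N/2)‖(1 - 𝒫[Z*])∇_x C[x[Z*]]‖², where C[x] = (1/(2N))‖x - y‖². -/
/-!
Since `𝒫 = D ((DᵀD)⁻¹Dᵀ)`, the critical-point condition gives `𝒫 ∇C = 0` directly, so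
`(1 - 𝒫) ∇C = ∇C`. For the L² cost `∇C[x] = (x - y) / N`, hence `C[x] = (N/2) ‖∇C[x]‖²`.
-/

open Matrix

section L2Cost

variable {F : Type*} [NormedAddCommGroup F] [InnerProductSpace ℝ F] [CompleteSpace F]

theorem hasGradientAt_const_mul_norm_sub_sq (c : ℝ) (x y : F) :
    HasGradientAt (fun v => c * ‖v - y‖ ^ 2) ((2 * c) • (x - y)) x := by
  rw [hasGradientAt_iff_hasFDerivAt]
  refine (((hasFDerivAt_sub_const (x := x) y).norm_sq).const_mul c).congr_fderiv ?_
  ext w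
  simp only [ContinuousLinearMap.comp_id, ← Nat.cast_smul_eq_nsmul ℝ, Nat.cast_ofNat,
    _root_.smul_apply, coe_innerSL_apply, smul_eq_mul, map_smul,
    InnerProductSpace.toDual_apply_apply]
  ring

theorem gradient_eq_of_eq_l2Cost {N : ℝ} {y : F} {C : F → ℝ}
    (hC : ∀ v, C v = (1 / (2 * N)) * ‖v - y‖ ^ 2) (x : F) :
    gradient C x = (1 / N) • (x - y) := by
  rw [funext hC, (hasGradientAt_const_mul_norm_sub_sq _ x y).gradient]
  field_simp

theorem eq_half_mul_norm_gradient_sq_of_eq_l2Cost {N : ℝ} {y : F} {C : F → ℝ}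
    (hC : ∀ v, C v = (1 / (2 * N)) * ‖v - y‖ ^ 2) (x : F) (hN : N ≠ 0) :
    C x = (N / 2) * ‖gradient C x‖ ^ 2 := by
  rw [gradient_eq_of_eq_l2Cost hC x, norm_smul, mul_pow, Real.norm_eq_abs, sq_abs, hC x]
  field_simp

end L2Cost

section EuclideanLin

variable {𝕜 : Type*} [RCLike 𝕜] {l m n : Type*} [Fintype m] [DecidableEq m]
  [Fintype n] [DecidableEq n]

theorem Matrix.toEuclideanLin_mul_apply_eq_zero (A : Matrix l m 𝕜) {B : Matrix m n 𝕜}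
    {v : EuclideanSpace 𝕜 n} (hv : toEuclideanLin B v = 0) : toEuclideanLin (A * B) v = 0 := by
  rw [toLpLin_mul_same, LinearMap.comp_apply, hv, map_zero]

theorem Matrix.toEuclideanLin_one_sub_apply_of_apply_eq_zero {P : Matrix n n 𝕜}
    {v : EuclideanSpace 𝕜 n} (hv : toEuclideanLin P v = 0) : toEuclideanLin (1 - P) v = v := by
  rw [map_sub, LinearMap.sub_apply, hv, sub_zero, toLpLin_one, LinearMap.id_apply]

end EuclideanLin

theorem underparam_critical_point_cost_general
    (n K : ℕ) (N : ℝ) (hN : 0 < N)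
    (y pt : EuclideanSpace ℝ (Fin n))
    (C : EuclideanSpace ℝ (Fin n) → ℝ)
    (hC : ∀ v, C v = (1 / (2 * N)) * ‖v - y‖ ^ 2)
    (D : Matrix (Fin n) (Fin K) ℝ)
    (hcrit : Matrix.toEuclideanLin ((Dᵀ * D)⁻¹ * Dᵀ) (gradient C pt) = 0) :
    Matrix.toEuclideanLin (D * (Dᵀ * D)⁻¹ * Dᵀ) (gradient C pt) = 0 ∧
      C pt = (N / 2) *
        ‖Matrix.toEuclideanLin (1 - D * (Dᵀ * D)⁻¹ * Dᵀ) (gradient C pt)‖ ^ 2 := by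
  have hproj : toEuclideanLin (D * (Dᵀ * D)⁻¹ * Dᵀ) (gradient C pt) = 0 := by
    rw [Matrix.mul_assoc]
    exact toEuclideanLin_mul_apply_eq_zero D hcrit
  refine ⟨hproj, ?_⟩
  rw [toEuclideanLin_one_sub_apply_of_apply_eq_zero hproj]
  exact eq_half_mul_norm_gradient_sq_of_eq_l2Cost hC pt hN.ne'

theorem underparam_critical_point_cost
    (n K : ℕ) (hKn : K < n) (N : ℝ) (hN : 0 < N)
    (y pt : EuclideanSpace ℝ (Fin n))
    (C : EuclideanSpace ℝ (Fin n) → ℝ)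
    (hC : ∀ v, C v = (1 / (2 * N)) * ‖v - y‖ ^ 2)
    (D : Matrix (Fin n) (Fin K) ℝ) (hrank : D.rank = K)
    (hcrit : Matrix.toEuclideanLin ((Dᵀ * D)⁻¹ * Dᵀ) (gradient C pt) = 0) :
    Matrix.toEuclideanLin (D * (Dᵀ * D)⁻¹ * Dᵀ) (gradient C pt) = 0 ∧
      C pt = (N / 2) *
        ‖Matrix.toEuclideanLin (1 - D * (Dᵀ * D)⁻¹ * Dᵀ) (gradient C pt)‖ ^ 2 :=
  underparam_critical_point_cost_general n K N hN y pt C hC D hcrit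
end
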